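/- arXiv:2502.14979 — 5 statements merged into one kernel-verified Lean document; each statement's English description precedes it below -/
import Mathlib

section
/- Let A be a symmetric positive definite n×n matrix, X the exact solution of AX = B, and let X_{k-1}, X_k, R_{k-1}, R_k, P_{k-1}, Υ_{k-1} satisfy the BCG update relations X_k = X_{k-1} + P_{k-1}Υ_{k-1}, R_k = B - AX_k, with P_{k-1}ᵀR_k = 0 and Υ_{k-1} = (P_{k-1}ᵀAP_{k-1})⁻¹(R_{k-1}ᵀR_{k-1}) where P_{k-1}ᵀAP_{k-1} is invertible. Then 𝔈_{k-1} - 𝔈_k = (R_{k-1}ᵀR_{k-1})Υ_{k-1}, where 𝔈_j = (X - X_j)ᵀA(X - X_j). -/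
/-!
Put `E = X - X_{k-1}` and `D = P_{k-1} Υ_{k-1}`, so that `X - X_k = E - D`. Expanding,
`𝔈_{k-1} - 𝔈_k = EᵀAD + DᵀA(E - D)`. The second term is `Υᵀ P_{k-1}ᵀ R_k = 0` by orthogonality,
and by symmetry of `A` the first is `(P_{k-1}ᵀ R_{k-1})ᵀ Υ`. Orthogonality also gives
`P_{k-1}ᵀ R_{k-1} = P_{k-1}ᵀ A P_{k-1} Υ = R_{k-1}ᵀ R_{k-1}` by the choice of `Υ`.
-/

open Matrix

namespace Matrix

variable {ι κ R : Type*} [Fintype ι] [CommRing R]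

theorem transpose_mul_mul_sub_transpose_mul_mul_sub (A : Matrix ι ι R) (E D : Matrix ι κ R) :
    Eᵀ * A * E - (E - D)ᵀ * A * (E - D) = Eᵀ * A * D + Dᵀ * A * (E - D) := by
  simp only [transpose_sub, Matrix.mul_sub, Matrix.sub_mul]
  abel

theorem transpose_sub_mul_eq_transpose_residual {A : Matrix ι ι R} (hA : A.IsSymm)
    {B X : Matrix ι κ R} (hX : A * X = B) (Y : Matrix ι κ R) :
    (X - Y)ᵀ * A = (B - A * Y)ᵀ := by
  rw [← hX, ← Matrix.mul_sub, transpose_mul, hA.eq]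

theorem transpose_mul_residual_eq_of_orthogonal [Fintype κ] [DecidableEq κ] {A : Matrix ι ι R}
    {B X₀ X₁ P : Matrix ι κ R} {Υ M : Matrix κ κ R} (hX₁ : X₁ = X₀ + P * Υ)
    (horth : Pᵀ * (B - A * X₁) = 0) (hPAP : IsUnit (Pᵀ * A * P))
    (hΥ : Υ = (Pᵀ * A * P)⁻¹ * M) :
    Pᵀ * (B - A * X₀) = M := by
  have hgalerkin : Pᵀ * (B - A * X₀) = Pᵀ * A * P * Υ := by
    rw [← sub_eq_zero, ← horth, hX₁]
    simp only [Matrix.mul_add, Matrix.mul_sub, Matrix.mul_assoc]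
    abel
  rw [hgalerkin, hΥ, mul_nonsing_inv_cancel_left _ _ ((isUnit_iff_isUnit_det _).mp hPAP)]

end Matrix

theorem stmt_3 {n m : ℕ} (A : Matrix (Fin n) (Fin n) ℝ) (hA : A.PosDef)
    (B X Xkm1 Xk Pkm1 : Matrix (Fin n) (Fin m) ℝ)
    (Ups : Matrix (Fin m) (Fin m) ℝ)
    (hX : A * X = B)
    (hXk : Xk = Xkm1 + Pkm1 * Ups)
    (horth : Pkm1ᵀ * (B - A * Xk) = 0)
    (hPAP : IsUnit (Pkm1ᵀ * A * Pkm1))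
    (hUps : Ups = (Pkm1ᵀ * A * Pkm1)⁻¹ * ((B - A * Xkm1)ᵀ * (B - A * Xkm1))) :
    (X - Xkm1)ᵀ * A * (X - Xkm1) - (X - Xk)ᵀ * A * (X - Xk)
      = (B - A * Xkm1)ᵀ * (B - A * Xkm1) * Ups := by
  have hsymm : A.IsSymm := isHermitian_iff_isSymm.mp hA.isHermitian
  have herr : X - Xk = (X - Xkm1) - Pkm1 * Ups := by rw [hXk, sub_add_eq_sub_sub]
  have hres := transpose_mul_residual_eq_of_orthogonal hXk horth hPAP hUps
  calc (X - Xkm1)ᵀ * A * (X - Xkm1) - (X - Xk)ᵀ * A * (X - Xk)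
      = (X - Xkm1)ᵀ * A * (Pkm1 * Ups) + (Pkm1 * Ups)ᵀ * A * (X - Xk) := by
        rw [herr, transpose_mul_mul_sub_transpose_mul_mul_sub]
    _ = (Pkm1ᵀ * (B - A * Xkm1))ᵀ * Ups + Upsᵀ * (Pkm1ᵀ * (B - A * Xk)) := by
        rw [transpose_sub_mul_eq_transpose_residual hsymm hX, transpose_mul, transpose_mul,
          transpose_transpose]
        simp only [Matrix.mul_assoc]
        rw [Matrix.mul_sub A X Xk, hX]
    _ = (B - A * Xkm1)ᵀ * (B - A * Xkm1) * Ups := by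
        rw [horth, Matrix.mul_zero, add_zero, hres, transpose_mul, transpose_transpose]
end

section
/- Under the BCG relations X_k = X_{k-1} + P_{k-1}Υ_{k-1}, P_{k-1}ᵀR_k = 0, Υ_{k-1} = (P_{k-1}ᵀAP_{k-1})⁻¹(R_{k-1}ᵀR_{k-1}) with A symmetric positive definite and P_{k-1}Υ_{k-1} of full column rank, the matrix Θ_{k-1} = (R_{k-1}ᵀR_{k-1})Υ_{k-1} is symmetric positive definite. -/
/-! Since `Υ = S⁻¹ (RᵀR)` with `S = PᵀAP` symmetric, `Θ = (RᵀR) S⁻¹ (RᵀR) = (PΥ)ᵀ A (PΥ)`,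
a congruence of the positive definite `A` by the injective matrix `PΥ`. -/

open Matrix

theorem Matrix.transpose_mul_mul_nonsing_inv_mul {α : Type*} [CommRing α] {n m k : Type*}
    [Fintype n] [Fintype m] [DecidableEq m] {A : Matrix n n α} (hA : Aᵀ = A) {P : Matrix n m α}
    (hS : IsUnit (Pᵀ * A * P)) (G : Matrix m k α) :
    (P * ((Pᵀ * A * P)⁻¹ * G))ᵀ * A * (P * ((Pᵀ * A * P)⁻¹ * G)) =
      Gᵀ * ((Pᵀ * A * P)⁻¹ * G) := by
  set S := Pᵀ * A * P
  have hST : Sᵀ = S := by simp only [S, transpose_mul, transpose_transpose, hA, Matrix.mul_assoc]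
  have hSS : S * S⁻¹ = 1 := mul_nonsing_inv S ((isUnit_iff_isUnit_det S).mp hS)
  calc (P * (S⁻¹ * G))ᵀ * A * (P * (S⁻¹ * G)) = Gᵀ * S⁻¹ᵀ * (S * S⁻¹) * G := by
        simp only [S, transpose_mul, Matrix.mul_assoc]
    _ = Gᵀ * (S⁻¹ * G) := by
        rw [transpose_nonsing_inv, hST, hSS, Matrix.mul_one, Matrix.mul_assoc]

theorem stmt_4_general {n m : ℕ} (A : Matrix (Fin n) (Fin n) ℝ) (hA : A.PosDef)
    (B Xkm1 Pkm1 : Matrix (Fin n) (Fin m) ℝ)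
    (Ups : Matrix (Fin m) (Fin m) ℝ)
    (hPAP : IsUnit (Pkm1ᵀ * A * Pkm1))
    (hUps : Ups = (Pkm1ᵀ * A * Pkm1)⁻¹ * ((B - A * Xkm1)ᵀ * (B - A * Xkm1)))
    (hrank : Function.Injective fun v : Fin m → ℝ => (Pkm1 * Ups).mulVec v) :
    ((B - A * Xkm1)ᵀ * (B - A * Xkm1) * Ups).PosDef := by
  set R := B - A * Xkm1
  have hAT : Aᵀ = A := (conjTranspose_eq_transpose_of_trivial A).symm.trans hA.isHermitian
  have hΘ : Rᵀ * R * Ups = (Pkm1 * Ups)ᴴ * A * (Pkm1 * Ups) := by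
    rw [conjTranspose_eq_transpose_of_trivial, hUps, transpose_mul_mul_nonsing_inv_mul hAT hPAP,
      transpose_mul, transpose_transpose]
  rw [hΘ]
  exact hA.conjTranspose_mul_mul_same hrank

theorem stmt_4 {n m : ℕ} (A : Matrix (Fin n) (Fin n) ℝ) (hA : A.PosDef)
    (B X Xkm1 Xk Pkm1 : Matrix (Fin n) (Fin m) ℝ)
    (Ups : Matrix (Fin m) (Fin m) ℝ)
    (hX : A * X = B)
    (hXk : Xk = Xkm1 + Pkm1 * Ups)
    (horth : Pkm1ᵀ * (B - A * Xk) = 0)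
    (hPAP : IsUnit (Pkm1ᵀ * A * Pkm1))
    (hUps : Ups = (Pkm1ᵀ * A * Pkm1)⁻¹ * ((B - A * Xkm1)ᵀ * (B - A * Xkm1)))
    (hrank : Function.Injective fun v : Fin m → ℝ => (Pkm1 * Ups).mulVec v) :
    ((B - A * Xkm1)ᵀ * (B - A * Xkm1) * Ups).PosDef :=
  stmt_4_general A hA B Xkm1 Pkm1 Ups hPAP hUps hrank
end

section
/- Let T_k be a nonsingular symmetric block tridiagonal matrix of order km admitting the block factorization T_k = L̃_k D_k⁻¹ L̃_k^T with diagonal blocks Δ_j and subdiagonal blocks Γ_j, where Π_j = Γ_jΔ_j⁻¹. Then the last m×m block of the first block column of T_k⁻¹ equals (−1)^{k-1} Δ_k⁻¹ Π_{k-1}⋯Π₁. -/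
open Matrix

/-- Block tridiagonal matrix with diagonal blocks `Ω j` and
subdiagonal block `Γ j` at block position `(j, j-1)` (0-based row `j`). -/
noncomputable def blockTridiag {k m : ℕ} (Ω Γ : ℕ → Matrix (Fin m) (Fin m) ℝ) :
    Matrix (Fin k × Fin m) (Fin k × Fin m) ℝ :=
  Matrix.of fun p q =>
    if (p.1 : ℕ) = (q.1 : ℕ) then Ω (q.1 : ℕ) p.2 q.2
    else if (p.1 : ℕ) = (q.1 : ℕ) + 1 then Γ (p.1 : ℕ) p.2 q.2
    else if (q.1 : ℕ) = (p.1 : ℕ) + 1 then (Γ (q.1 : ℕ))ᵀ p.2 q.2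
    else 0

/-- Lower block bidiagonal matrix with diagonal blocks `Δ j` (0-based) and
subdiagonal block `Γ j` at block position `(j, j-1)` (0-based row `j`). -/
noncomputable def lowerBlockBidiag {k m : ℕ} (Δ Γ : ℕ → Matrix (Fin m) (Fin m) ℝ) :
    Matrix (Fin k × Fin m) (Fin k × Fin m) ℝ :=
  Matrix.of fun p q =>
    if (p.1 : ℕ) = (q.1 : ℕ) then Δ (q.1 : ℕ) p.2 q.2
    else if (p.1 : ℕ) = (q.1 : ℕ) + 1 then Γ (p.1 : ℕ) p.2 q.2
    else 0

/-- Block diagonal matrix with diagonal blocks `Δ j`. -/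
noncomputable def blockDiag {k m : ℕ} (Δ : ℕ → Matrix (Fin m) (Fin m) ℝ) :
    Matrix (Fin k × Fin m) (Fin k × Fin m) ℝ :=
  Matrix.of fun p q =>
    if (p.1 : ℕ) = (q.1 : ℕ) then Δ (q.1 : ℕ) p.2 q.2 else 0

/-- First block column of the identity: `E₁ = e₁ ⊗ I_m`. -/
noncomputable def firstBlockCol {k m : ℕ} : Matrix (Fin k × Fin m) (Fin m) ℝ :=
  Matrix.of fun p b =>
    if (p.1 : ℕ) = 0 then (1 : Matrix (Fin m) (Fin m) ℝ) p.2 b else 0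

/-- The `i`-th `m × m` block of a block column vector. -/
noncomputable def blockOf {k m : ℕ} (M : Matrix (Fin k × Fin m) (Fin m) ℝ) (i : Fin k) :
    Matrix (Fin m) (Fin m) ℝ :=
  Matrix.of fun a b => M (i, a) b

/-!
Write `T = L D⁻¹ Lᵀ`. Taking determinants, `D` and `L` are invertible, hence so is every pivot
`Δ j`; and since `T` and `L D⁻¹ Lᵀ` are both symmetric, cancelling `L` gives `Dᵀ = D`.
For `W = T⁻¹ E₁` we get `Lᵀ W = D (L⁻¹ E₁)`, where `L⁻¹ E₁` is found by block forward
substitution: `x₀ = Δ₀⁻¹`, `x_{j+1} = -Δ_{j+1}⁻¹ Γ_{j+1} x_j`, which unrolls to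
`(-1)ʲ Δⱼ⁻¹ Πⱼ₋₁ ⋯ Π₀`. The last block row of `Lᵀ` is `(0, …, 0, Δ_{k-1}ᵀ)`, so comparing last
blocks gives `Δ_{k-1} W_{k-1} = Δ_{k-1} x_{k-1}`.
-/

section BlockAlgebra

variable {k m : ℕ}

noncomputable def blockCol (x : ℕ → Matrix (Fin m) (Fin m) ℝ) :
    Matrix (Fin k × Fin m) (Fin m) ℝ :=
  Matrix.of fun p b => x p.1 p.2 b

@[simp]
lemma blockOf_blockCol (x : ℕ → Matrix (Fin m) (Fin m) ℝ) (i : Fin k) :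
    blockOf (blockCol x) i = x i :=
  rfl

lemma blockOf_firstBlockCol (i : Fin k) :
    blockOf firstBlockCol i = if (i : ℕ) = 0 then (1 : Matrix (Fin m) (Fin m) ℝ) else 0 := by
  ext a b
  split_ifs <;> simp [blockOf, firstBlockCol, *]

lemma ext_blockOf {X Y : Matrix (Fin k × Fin m) (Fin m) ℝ}
    (h : ∀ i, blockOf X i = blockOf Y i) : X = Y := by
  ext ⟨i, a⟩ b
  exact congrFun (congrFun (h i) a) b

lemma blockOf_mul (A : Matrix (Fin k × Fin m) (Fin k × Fin m) ℝ)
    (X : Matrix (Fin k × Fin m) (Fin m) ℝ) (i : Fin k) :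
    blockOf (A * X) i = ∑ j, A.submatrix (Prod.mk i) (Prod.mk j) * blockOf X j := by
  ext a b
  simp [blockOf, mul_apply, Fintype.sum_prod_type, Matrix.sum_apply]

variable (Δ Γ : ℕ → Matrix (Fin m) (Fin m) ℝ)

lemma submatrix_blockDiag (i j : Fin k) :
    (blockDiag Δ : Matrix (Fin k × Fin m) (Fin k × Fin m) ℝ).submatrix (Prod.mk i) (Prod.mk j) =
      if i = j then Δ i else 0 := by
  ext a b
  split_ifs with h <;> simp [_root_.blockDiag, Fin.val_inj, h]

lemma submatrix_lowerBlockBidiag (i j : Fin k) :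
    (lowerBlockBidiag Δ Γ : Matrix (Fin k × Fin m) (Fin k × Fin m) ℝ).submatrix
        (Prod.mk i) (Prod.mk j) =
      if (i : ℕ) = j then Δ i else if (i : ℕ) = j + 1 then Γ i else 0 := by
  ext a b
  split_ifs <;> simp_all [lowerBlockBidiag]

lemma submatrix_transpose_lowerBlockBidiag (i j : Fin k) :
    (lowerBlockBidiag Δ Γ : Matrix (Fin k × Fin m) (Fin k × Fin m) ℝ)ᵀ.submatrix
        (Prod.mk i) (Prod.mk j) =
      if (i : ℕ) = j then (Δ i)ᵀ else if (j : ℕ) = i + 1 then (Γ j)ᵀ else 0 := by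
  ext a b
  split_ifs <;> simp_all [lowerBlockBidiag, eq_comm]

lemma blockOf_blockDiag_mul (X : Matrix (Fin k × Fin m) (Fin m) ℝ) (i : Fin k) :
    blockOf ((blockDiag Δ : Matrix (Fin k × Fin m) (Fin k × Fin m) ℝ) * X) i =
      Δ i * blockOf X i := by
  rw [blockOf_mul, Fintype.sum_eq_single i fun j hj => by simp [submatrix_blockDiag, hj.symm]]
  simp [submatrix_blockDiag]

lemma det_blockDiag :
    (blockDiag Δ : Matrix (Fin k × Fin m) (Fin k × Fin m) ℝ).det = ∏ j : Fin k, (Δ j).det := by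
  have : (blockDiag Δ : Matrix (Fin k × Fin m) (Fin k × Fin m) ℝ) =
      (blockDiagonal fun j : Fin k => Δ j).submatrix Prod.swap Prod.swap := by
    ext ⟨i, a⟩ ⟨j, b⟩
    by_cases h : i = j
    · simp [_root_.blockDiag, blockDiagonal_apply, h]
    · simp [_root_.blockDiag, blockDiagonal_apply, h, Fin.val_inj]
  rw [this, ← Equiv.coe_prodComm, det_submatrix_equiv_self, det_blockDiagonal]

lemma blockOf_lowerBlockBidiag_mul_zero (X : Matrix (Fin k × Fin m) (Fin m) ℝ) (i : Fin k)
    (hi : (i : ℕ) = 0) :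
    blockOf ((lowerBlockBidiag Δ Γ : Matrix (Fin k × Fin m) (Fin k × Fin m) ℝ) * X) i =
      Δ 0 * blockOf X i := by
  rw [blockOf_mul, Fintype.sum_eq_single i fun j hj => by
    rw [submatrix_lowerBlockBidiag, if_neg (Fin.val_ne_of_ne hj.symm), if_neg (by omega),
      zero_mul]]
  simp [submatrix_lowerBlockBidiag, hi]

lemma blockOf_lowerBlockBidiag_mul_succ (X : Matrix (Fin k × Fin m) (Fin m) ℝ) (i j : Fin k)
    (hij : (i : ℕ) = j + 1) :
    blockOf ((lowerBlockBidiag Δ Γ : Matrix (Fin k × Fin m) (Fin k × Fin m) ℝ) * X) i =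
      Δ i * blockOf X i + Γ i * blockOf X j := by
  have hne : i ≠ j := fun h => by simp [h] at hij
  rw [blockOf_mul, Fintype.sum_eq_add i j hne fun l hl => by
    have hlj := Fin.val_ne_of_ne hl.2
    rw [submatrix_lowerBlockBidiag, if_neg (Fin.val_ne_of_ne hl.1.symm), if_neg (by omega),
      zero_mul]]
  simp [submatrix_lowerBlockBidiag, hij]

lemma blockOf_transpose_lowerBlockBidiag_mul_of_succ_eq (X : Matrix (Fin k × Fin m) (Fin m) ℝ)
    (i : Fin k) (hi : (i : ℕ) + 1 = k) :
    blockOf ((lowerBlockBidiag Δ Γ : Matrix (Fin k × Fin m) (Fin k × Fin m) ℝ)ᵀ * X) i =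
      (Δ i)ᵀ * blockOf X i := by
  rw [blockOf_mul, Fintype.sum_eq_single i fun j hj => by
    simp [submatrix_transpose_lowerBlockBidiag, Fin.val_ne_of_ne hj.symm, hi, j.isLt.ne]]
  simp [submatrix_transpose_lowerBlockBidiag]

lemma transpose_eq_of_transpose_blockDiag_eq
    (h : (blockDiag Δ : Matrix (Fin k × Fin m) (Fin k × Fin m) ℝ)ᵀ = blockDiag Δ) (i : Fin k) :
    (Δ i)ᵀ = Δ i := by
  have hi := congrArg (fun D => D.submatrix (Prod.mk i) (Prod.mk i)) h
  simp only [← transpose_submatrix, submatrix_blockDiag] at hi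
  exact hi

end BlockAlgebra

section ForwardSubstitution

variable {m : ℕ} (Δ Γ : ℕ → Matrix (Fin m) (Fin m) ℝ)

noncomputable def forwardSubst : ℕ → Matrix (Fin m) (Fin m) ℝ
  | 0 => (Δ 0)⁻¹
  | n + 1 => -((Δ (n + 1))⁻¹ * Γ (n + 1) * forwardSubst n)

lemma forwardSubst_eq_smul_prod (n : ℕ) :
    forwardSubst Δ Γ n = (-1 : ℝ) ^ n •
      ((Δ n)⁻¹ * ((List.range n).map fun i => Γ (n - i) * (Δ (n - 1 - i))⁻¹).prod) := by
  induction n with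
  | zero => simp [forwardSubst]
  | succ n ih =>
    have hprod : ((List.range (n + 1)).map fun i => Γ (n + 1 - i) * (Δ (n + 1 - 1 - i))⁻¹).prod =
        Γ (n + 1) * (Δ n)⁻¹ *
          ((List.range n).map fun i => Γ (n - i) * (Δ (n - 1 - i))⁻¹).prod := by
      rw [List.range_succ_eq_map, List.map_cons, List.prod_cons, List.map_map]
      congr 2
      refine List.map_congr_left fun i _ => ?_
      simp only [Function.comp_apply, Nat.succ_eq_add_one]
      rw [show n + 1 - (i + 1) = n - i by omega, show n + 1 - 1 - (i + 1) = n - 1 - i by omega]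
    rw [forwardSubst, ih, hprod, pow_succ]
    simp only [Matrix.mul_smul, Matrix.mul_assoc, neg_smul, mul_neg_one]

lemma lowerBlockBidiag_mul_blockCol_forwardSubst {k : ℕ} (hΔ : ∀ j, j < k → IsUnit (Δ j).det) :
    (lowerBlockBidiag Δ Γ : Matrix (Fin k × Fin m) (Fin k × Fin m) ℝ) *
      (blockCol (forwardSubst Δ Γ) : Matrix (Fin k × Fin m) (Fin m) ℝ) = firstBlockCol := by
  refine ext_blockOf fun ⟨i, hi⟩ => ?_
  rw [blockOf_firstBlockCol]
  cases i with
  | zero =>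
    rw [blockOf_lowerBlockBidiag_mul_zero _ _ _ _ rfl, blockOf_blockCol, forwardSubst,
      mul_nonsing_inv _ (hΔ 0 hi), if_pos rfl]
  | succ n =>
    rw [blockOf_lowerBlockBidiag_mul_succ _ _ _ _ ⟨n, by omega⟩ rfl, blockOf_blockCol,
      blockOf_blockCol, forwardSubst, mul_neg, ← Matrix.mul_assoc, ← Matrix.mul_assoc,
      mul_nonsing_inv _ (hΔ _ hi), Matrix.one_mul, neg_add_cancel, if_neg n.succ_ne_zero]

end ForwardSubstitution

section LDLt

variable {n p R : Type*} [Fintype n] [DecidableEq n] [CommRing R] {L D : Matrix n n R}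

lemma isUnit_det_of_isUnit_mul_inv_mul_transpose (h : IsUnit (L * D⁻¹ * Lᵀ)) :
    IsUnit L.det ∧ IsUnit D.det := by
  rw [isUnit_iff_isUnit_det, det_mul, det_mul] at h
  exact ⟨isUnit_of_mul_isUnit_left (isUnit_of_mul_isUnit_left h),
    isUnit_nonsing_inv_det_iff.mp (isUnit_of_mul_isUnit_right (isUnit_of_mul_isUnit_left h))⟩

lemma transpose_eq_of_mul_inv_mul_transpose_symm (hL : IsUnit L.det) (hD : IsUnit D.det)
    (h : (L * D⁻¹ * Lᵀ)ᵀ = L * D⁻¹ * Lᵀ) : Dᵀ = D := by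
  have hL' : IsUnit L := (isUnit_iff_isUnit_det L).mpr hL
  have hLt : IsUnit Lᵀ := (isUnit_iff_isUnit_det Lᵀ).mpr (by rwa [det_transpose])
  rw [transpose_mul, transpose_mul, transpose_transpose, ← Matrix.mul_assoc] at h
  have hDinv : Dᵀ⁻¹ = D⁻¹ := by
    rw [← transpose_nonsing_inv]
    exact hL'.mul_left_cancel (hLt.mul_right_cancel h)
  calc Dᵀ = Dᵀ⁻¹⁻¹ := (nonsing_inv_nonsing_inv _ (by rwa [det_transpose])).symm
    _ = D := by rw [hDinv, nonsing_inv_nonsing_inv _ hD]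

lemma transpose_mul_inv_mul_inv_mul_transpose_mul {X E : Matrix n p R} (hL : IsUnit L.det)
    (hD : IsUnit D.det) (hLX : L * X = E) : Lᵀ * ((L * D⁻¹ * Lᵀ)⁻¹ * E) = D * X := by
  rw [Matrix.mul_inv_rev, Matrix.mul_inv_rev, nonsing_inv_nonsing_inv _ hD, ← hLX]
  simp only [Matrix.mul_assoc]
  rw [nonsing_inv_mul_cancel_left _ _ hL, mul_nonsing_inv_cancel_left _ _ (by rwa [det_transpose])]

end LDLt

theorem stmt_9_general {k m : ℕ} (hk : 0 < k) (Ω Γ Δ : ℕ → Matrix (Fin m) (Fin m) ℝ)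
    (hTsym : (blockTridiag Ω Γ : Matrix (Fin k × Fin m) (Fin k × Fin m) ℝ)ᵀ =
      blockTridiag Ω Γ)
    (hTunit : IsUnit (blockTridiag Ω Γ : Matrix (Fin k × Fin m) (Fin k × Fin m) ℝ))
    (hfact : (blockTridiag Ω Γ : Matrix (Fin k × Fin m) (Fin k × Fin m) ℝ) =
      lowerBlockBidiag Δ Γ * (blockDiag Δ : Matrix (Fin k × Fin m) (Fin k × Fin m) ℝ)⁻¹ *
        (lowerBlockBidiag Δ Γ)ᵀ) :
    blockOf ((blockTridiag Ω Γ : Matrix (Fin k × Fin m) (Fin k × Fin m) ℝ)⁻¹ * firstBlockCol)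
        ⟨k - 1, Nat.sub_lt hk one_pos⟩ =
      ((-1 : ℝ) ^ (k - 1)) •
        ((Δ (k - 1))⁻¹ *
          ((List.range (k - 1)).map fun i => Γ (k - 1 - i) * (Δ (k - 2 - i))⁻¹).prod) := by
  set T : Matrix (Fin k × Fin m) (Fin k × Fin m) ℝ := blockTridiag Ω Γ
  set L : Matrix (Fin k × Fin m) (Fin k × Fin m) ℝ := lowerBlockBidiag Δ Γ
  set D : Matrix (Fin k × Fin m) (Fin k × Fin m) ℝ := blockDiag Δ
  set E : Matrix (Fin k × Fin m) (Fin m) ℝ := firstBlockCol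
  set X : Matrix (Fin k × Fin m) (Fin m) ℝ := blockCol (forwardSubst Δ Γ)
  obtain ⟨hL, hD⟩ := isUnit_det_of_isUnit_mul_inv_mul_transpose (hfact ▸ hTunit)
  have hΔ (j : ℕ) (hj : j < k) : IsUnit (Δ j).det := by
    rw [det_blockDiag] at hD
    exact IsUnit.prod_univ_iff.mp hD ⟨j, hj⟩
  have hDsymm : Dᵀ = D := transpose_eq_of_mul_inv_mul_transpose_symm hL hD (hfact ▸ hTsym)
  have hLX : L * X = E := lowerBlockBidiag_mul_blockCol_forwardSubst Δ Γ hΔ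
  have hW : Lᵀ * (T⁻¹ * E) = D * X :=
    hfact ▸ transpose_mul_inv_mul_inv_mul_transpose_mul hL hD hLX
  set i : Fin k := ⟨k - 1, Nat.sub_lt hk one_pos⟩
  have hlast : (Δ i)ᵀ * blockOf (T⁻¹ * E) i = Δ i * blockOf X i := by
    rw [← blockOf_transpose_lowerBlockBidiag_mul_of_succ_eq Δ Γ _ i (Nat.sub_add_cancel hk),
      hW, blockOf_blockDiag_mul]
  rw [transpose_eq_of_transpose_blockDiag_eq Δ hDsymm] at hlast
  have hcol : blockOf (T⁻¹ * E) i = forwardSubst Δ Γ (k - 1) :=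
    ((isUnit_iff_isUnit_det _).mpr (hΔ _ i.isLt)).mul_left_cancel hlast
  rw [forwardSubst_eq_smul_prod] at hcol
  simp only [show ∀ j, k - 1 - 1 - j = k - 2 - j by omega] at hcol
  exact hcol

theorem stmt_9 {k m : ℕ} (hk : 0 < k) (Ω Γ Δ : ℕ → Matrix (Fin m) (Fin m) ℝ)
    (hTsym : (blockTridiag Ω Γ : Matrix (Fin k × Fin m) (Fin k × Fin m) ℝ)ᵀ =
      blockTridiag Ω Γ)
    (hTunit : IsUnit (blockTridiag Ω Γ : Matrix (Fin k × Fin m) (Fin k × Fin m) ℝ))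
    (hΔunit : ∀ j, j < k → IsUnit (Δ j))
    (hfact : (blockTridiag Ω Γ : Matrix (Fin k × Fin m) (Fin k × Fin m) ℝ) =
      lowerBlockBidiag Δ Γ * (blockDiag Δ : Matrix (Fin k × Fin m) (Fin k × Fin m) ℝ)⁻¹ *
        (lowerBlockBidiag Δ Γ)ᵀ) :
    blockOf ((blockTridiag Ω Γ : Matrix (Fin k × Fin m) (Fin k × Fin m) ℝ)⁻¹ * firstBlockCol)
        ⟨k - 1, Nat.sub_lt hk one_pos⟩ =
      ((-1 : ℝ) ^ (k - 1)) •
        ((Δ (k - 1))⁻¹ *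
          ((List.range (k - 1)).map fun i => Γ (k - 1 - i) * (Δ (k - 2 - i))⁻¹).prod) :=
  stmt_9_general hk Ω Γ Δ hTsym hTunit hfact
end

section
/- With the definitions of the previous recurrences and assuming each Δ_i and Δ̄_i^{(μ)} is symmetric positive definite with Δ_i^{(μ)} = Δ_i − Δ̄_i^{(μ)}, each Δ_i^{(μ)} is symmetric positive definite. -/
/-!
By induction `Δ i - Δbar i = Δμ i` is positive definite. Then `Δbar i⁻¹ - Δ i⁻¹` is positive
definite, being the inverse of `B + B D⁻¹ B` with `B = Δbar i`, `D = Δμ i`. Conjugating by `Γ i`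
keeps it positive semidefinite, and adding `μ • 1` makes `Δμ (i + 1)` positive definite.
-/

open Matrix

namespace Matrix

lemma inv_sub_inv_eq_inv_add_mul_inv_mul {n R : Type*} [Fintype n] [DecidableEq n] [CommRing R]
    {A B : Matrix n n R} (hA : IsUnit A) (hB : IsUnit B) (hD : IsUnit (A - B)) :
    B⁻¹ - A⁻¹ = (B + B * (A - B)⁻¹ * B)⁻¹ := by
  rw [isUnit_iff_isUnit_det] at hA hB hD
  set D := A - B
  have hfactor : B + B * D⁻¹ * B = B * D⁻¹ * A := by
    rw [show A = D + B by simp [D], Matrix.mul_add, nonsing_inv_mul_cancel_right _ _ hD]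
  refine (inv_eq_right_inv ?_).symm
  rw [Matrix.mul_sub, hfactor, mul_nonsing_inv_cancel_right _ _ hA, ← hfactor, Matrix.add_mul,
    mul_nonsing_inv _ hB, mul_nonsing_inv_cancel_right _ _ hB, add_sub_cancel_right]

open scoped ComplexOrder in
lemma PosDef.inv_sub_inv {n 𝕜 : Type*} [Fintype n] [DecidableEq n] [RCLike 𝕜]
    {A B : Matrix n n 𝕜} (hB : B.PosDef) (hAB : (A - B).PosDef) :
    (B⁻¹ - A⁻¹).PosDef := by
  have hA : A.PosDef := by simpa using hAB.add hB
  rw [inv_sub_inv_eq_inv_add_mul_inv_mul hA.isUnit hB.isUnit hAB.isUnit]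
  refine PosDef.inv (hB.add_posSemidef ?_)
  have hBDB := hAB.inv.posSemidef.conjTranspose_mul_mul_same B
  rwa [hB.isHermitian.eq] at hBDB

end Matrix

theorem stmt_13_general {m : ℕ} (μ : ℝ) (hμ : 0 < μ)
    (Γ Δ Δbar Δμ : ℕ → Matrix (Fin m) (Fin m) ℝ)
    (hΔbarpd : ∀ i, (Δbar i).PosDef)
    (hdiff : ∀ i, Δ i - Δbar i = Δμ i)
    (hΔμ0 : Δμ 0 = μ • (1 : Matrix (Fin m) (Fin m) ℝ))
    (hΔμ : ∀ i, Δμ (i + 1) =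
      μ • (1 : Matrix (Fin m) (Fin m) ℝ) + Γ i * ((Δbar i)⁻¹ - (Δ i)⁻¹) * (Γ i)ᵀ) :
    ∀ i, (Δμ i).PosDef := by
  intro i
  induction i with
  | zero => rw [hΔμ0]; exact PosDef.one.smul hμ
  | succ i ih =>
    have hgap : ((Δbar i)⁻¹ - (Δ i)⁻¹).PosDef := (hΔbarpd i).inv_sub_inv (by rwa [hdiff])
    rw [hΔμ i, ← conjTranspose_eq_transpose_of_trivial]
    exact (PosDef.one.smul hμ).add_posSemidef (hgap.posSemidef.mul_mul_conjTranspose_same (Γ i))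

theorem stmt_13 {m : ℕ} (μ : ℝ) (hμ : 0 < μ)
    (Γ Δ Δbar Δμ : ℕ → Matrix (Fin m) (Fin m) ℝ)
    (hΔpd : ∀ i, (Δ i).PosDef)
    (hΔbarpd : ∀ i, (Δbar i).PosDef)
    (hdiff : ∀ i, Δ i - Δbar i = Δμ i)
    (hΓunit : ∀ i, IsUnit (Γ i))
    (hΔμ0 : Δμ 0 = μ • (1 : Matrix (Fin m) (Fin m) ℝ))
    (hΔμ : ∀ i, Δμ (i + 1) =
      μ • (1 : Matrix (Fin m) (Fin m) ℝ) + Γ i * ((Δbar i)⁻¹ - (Δ i)⁻¹) * (Γ i)ᵀ) :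
    ∀ i, (Δμ i).PosDef :=
  stmt_13_general μ hμ Γ Δ Δbar Δμ hΔbarpd hdiff hΔμ0 hΔμ
end

section
/- Let A be symmetric positive definite of order n and suppose the block Lanczos relation A𝒱_q = 𝒱_q T_q holds with 𝒱_qᵀ𝒱_q = I, 𝒱_qᵀA𝒱_q = T_q, and let X = X₀ + 𝒱_q T_q⁻¹ Ē₁Φ₀ and X_k = X₀ + 𝒱_k T_k⁻¹ E₁Φ₀ where 𝒱_k consists of the first km columns of 𝒱_q and T_k is the leading principal km×km block of T_q. Then (X − X_k)ᵀA(X − X_k) = Φ₀ᵀ([T_q⁻¹]₁₁ − [T_k⁻¹]₁₁)Φ₀, where [·]₁₁ denotes the leading m×m block. -/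
/-!
Let `P` be the `0/1` matrix selecting the leading `km` coordinates, so that `𝒱_k = 𝒱_q P`,
`T_k = Pᵀ T_q P` and `E₁ = Pᵀ Ē₁`. With `G := Ē₁ Φ₀` the two approximations differ by
`X - X_k = 𝒱_q W`, `W := T_q⁻¹ G - P T_k⁻¹ Pᵀ G`, and `T_q = 𝒱_qᵀ A 𝒱_q` turns the energy into
`Wᵀ T_q W`. Expanding it for symmetric `T_q`, both cross terms and the last term equal
`Gᵀ P T_k⁻¹ Pᵀ G`, which leaves `Gᵀ T_q⁻¹ G - Gᵀ P T_k⁻¹ Pᵀ G`.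
-/

open Matrix

/-- Leading `km` columns of an `n × qm` block matrix (`k ≤ q`). -/
noncomputable def leadingBlockCols {n q m : ℕ} (k : ℕ) (hk : k ≤ q)
    (V : Matrix (Fin n) (Fin q × Fin m) ℝ) : Matrix (Fin n) (Fin k × Fin m) ℝ :=
  Matrix.of fun r p => V r (Fin.castLE hk p.1, p.2)

/-- Leading principal `km × km` submatrix of a `qm × qm` block matrix (`k ≤ q`). -/
noncomputable def leadingBlockSub {q m : ℕ} (k : ℕ) (hk : k ≤ q)
    (T : Matrix (Fin q × Fin m) (Fin q × Fin m) ℝ) :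
    Matrix (Fin k × Fin m) (Fin k × Fin m) ℝ :=
  Matrix.of fun p p' => T (Fin.castLE hk p.1, p.2) (Fin.castLE hk p'.1, p'.2)

namespace Matrix

variable {ι R : Type*} [Fintype ι] [DecidableEq ι] [CommRing R]

theorem galerkin_sub_energy {κ μ : Type*} [Fintype κ] [DecidableEq κ] {T : Matrix ι ι R}
    (hT : Tᵀ = T) (hTu : IsUnit T.det) (P : Matrix ι κ R) (hPTP : IsUnit (Pᵀ * T * P).det)
    (E : Matrix ι μ R) :
    (T⁻¹ * E - P * (Pᵀ * T * P)⁻¹ * (Pᵀ * E))ᵀ * T *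
        (T⁻¹ * E - P * (Pᵀ * T * P)⁻¹ * (Pᵀ * E)) =
      Eᵀ * T⁻¹ * E - (Pᵀ * E)ᵀ * (Pᵀ * T * P)⁻¹ * (Pᵀ * E) := by
  have hSsymm : (Pᵀ * T * P)ᵀ = Pᵀ * T * P := by
    simp only [transpose_mul, transpose_transpose, hT, Matrix.mul_assoc]
  have hSS (Z : Matrix κ μ R) : Pᵀ * (T * (P * Z)) = (Pᵀ * T * P) * Z := by
    simp only [Matrix.mul_assoc]
  generalize Pᵀ * T * P = S at hSsymm hSS hPTP ⊢
  have hTinv : T⁻¹ᵀ = T⁻¹ := by rw [transpose_nonsing_inv, hT]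
  have hSinv : S⁻¹ᵀ = S⁻¹ := by rw [transpose_nonsing_inv, hSsymm]
  simp only [transpose_sub, transpose_mul, hTinv, hSinv, transpose_transpose, Matrix.sub_mul,
    Matrix.mul_sub, Matrix.mul_assoc, mul_nonsing_inv_cancel_left T _ hTu,
    nonsing_inv_mul_cancel_left T _ hTu, hSS, mul_nonsing_inv_cancel_left S _ hPTP]
  abel

theorem mul_one_submatrix_id {α κ : Type*} (M : Matrix α ι R) (e : κ → ι) :
    M * (1 : Matrix ι ι R).submatrix id e = M.submatrix id e :=
  mul_submatrix_one (Equiv.refl ι) e M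

theorem transpose_one_submatrix_id_mul {β κ : Type*} (N : Matrix ι β R) (e : κ → ι) :
    ((1 : Matrix ι ι R).submatrix id e)ᵀ * N = N.submatrix e id := by
  rw [transpose_submatrix, transpose_one]
  exact one_submatrix_mul e (Equiv.refl ι) N

theorem mulVec_injective_of_mul_eq_one {κ : Type*} [Fintype κ] {B : Matrix ι κ R}
    {V : Matrix κ ι R} (h : B * V = 1) : Function.Injective V.mulVec := by
  intro x y hxy
  simpa only [mulVec_mulVec, h, one_mulVec] using congrArg (B *ᵥ ·) hxy

end Matrix

section LeadingBlocks

variable {q m k : ℕ}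

def leadingBlockEmbedding (hk : k ≤ q) : Fin k × Fin m → Fin q × Fin m :=
  Prod.map (Fin.castLE hk) id

noncomputable def leadingBlockSelection (m : ℕ) (hk : k ≤ q) :
    Matrix (Fin q × Fin m) (Fin k × Fin m) ℝ :=
  (1 : Matrix (Fin q × Fin m) (Fin q × Fin m) ℝ).submatrix id (leadingBlockEmbedding hk)

theorem leadingBlockCols_eq_mul_selection {n : ℕ} (hk : k ≤ q)
    (V : Matrix (Fin n) (Fin q × Fin m) ℝ) :
    leadingBlockCols k hk V = V * leadingBlockSelection m hk :=
  (mul_one_submatrix_id V _).symm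

theorem leadingBlockSub_eq_selection_conj (hk : k ≤ q)
    (T : Matrix (Fin q × Fin m) (Fin q × Fin m) ℝ) :
    leadingBlockSub k hk T = (leadingBlockSelection m hk)ᵀ * T * leadingBlockSelection m hk := by
  rw [leadingBlockSelection, transpose_one_submatrix_id_mul, mul_one_submatrix_id,
    submatrix_submatrix]
  rfl

theorem firstBlockCol_eq_selection_mul (hk : k ≤ q) :
    (firstBlockCol : Matrix (Fin k × Fin m) (Fin m) ℝ) =
      (leadingBlockSelection m hk)ᵀ * (firstBlockCol : Matrix (Fin q × Fin m) (Fin m) ℝ) := by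
  rw [leadingBlockSelection, transpose_one_submatrix_id_mul]
  rfl

end LeadingBlocks

theorem stmt_19_general {n q m k : ℕ} (hk : k ≤ q)
    (A : Matrix (Fin n) (Fin n) ℝ) (hA : A.PosDef)
    (V : Matrix (Fin n) (Fin q × Fin m) ℝ)
    (T : Matrix (Fin q × Fin m) (Fin q × Fin m) ℝ)
    (horth : Vᵀ * V = 1)
    (hT : T = Vᵀ * A * V)
    (hTk : IsUnit (leadingBlockSub k hk T))
    (Φ0 : Matrix (Fin m) (Fin m) ℝ)
    (X0 X Xk : Matrix (Fin n) (Fin m) ℝ)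
    (hX : X = X0 + V * T⁻¹ * (firstBlockCol : Matrix (Fin q × Fin m) (Fin m) ℝ) * Φ0)
    (hXk : Xk = X0 + leadingBlockCols k hk V * (leadingBlockSub k hk T)⁻¹ * (firstBlockCol : Matrix (Fin k × Fin m) (Fin m) ℝ) * Φ0) :
    (X - Xk)ᵀ * A * (X - Xk) =
      Φ0ᵀ * ((firstBlockCol : Matrix (Fin q × Fin m) (Fin m) ℝ)ᵀ * T⁻¹ * firstBlockCol -
        (firstBlockCol : Matrix (Fin k × Fin m) (Fin m) ℝ)ᵀ * (leadingBlockSub k hk T)⁻¹ * firstBlockCol) * Φ0 := by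
  have hTpd : T.PosDef := by
    simpa only [hT, conjTranspose_eq_transpose_of_trivial] using
      hA.conjTranspose_mul_mul_same (mulVec_injective_of_mul_eq_one horth)
  have hTsymm : Tᵀ = T := (conjTranspose_eq_transpose_of_trivial T).symm.trans hTpd.isHermitian.eq
  have henergy (W : Matrix (Fin q × Fin m) (Fin m) ℝ) : (V * W)ᵀ * A * (V * W) = Wᵀ * T * W := by
    rw [hT]
    simp only [transpose_mul, Matrix.mul_assoc]
  rw [leadingBlockSub_eq_selection_conj] at hTk ⊢
  rw [leadingBlockCols_eq_mul_selection, leadingBlockSub_eq_selection_conj] at hXk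
  set P := leadingBlockSelection m hk
  set F := (firstBlockCol : Matrix (Fin q × Fin m) (Fin m) ℝ)
  set Fk := (firstBlockCol : Matrix (Fin k × Fin m) (Fin m) ℝ)
  have hPF : Pᵀ * (F * Φ0) = Fk * Φ0 := by
    rw [← Matrix.mul_assoc, ← firstBlockCol_eq_selection_mul hk]
  have hdiff : X - Xk = V * (T⁻¹ * (F * Φ0) - P * (Pᵀ * T * P)⁻¹ * (Pᵀ * (F * Φ0))) := by
    rw [hX, hXk, hPF]
    simp only [Matrix.mul_sub, Matrix.mul_assoc, add_sub_add_left_eq_sub]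
  -- The goal's trailing `* firstBlockCol` factors elaborate with `CStarMatrix`'s default `HMul`
  -- instance, which is matrix multiplication only up to unfolding; `calc` matches up to defeq.
  calc (X - Xk)ᵀ * A * (X - Xk)
      = (F * Φ0)ᵀ * T⁻¹ * (F * Φ0) - (Pᵀ * (F * Φ0))ᵀ * (Pᵀ * T * P)⁻¹ * (Pᵀ * (F * Φ0)) := by
        rw [hdiff, henergy, galerkin_sub_energy hTsymm
          ((isUnit_iff_isUnit_det T).mp hTpd.isUnit) P ((isUnit_iff_isUnit_det _).mp hTk)]
    _ = Φ0ᵀ * (Fᵀ * T⁻¹ * F - Fkᵀ * (Pᵀ * T * P)⁻¹ * Fk) * Φ0 := by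
        simp only [hPF, transpose_mul, Matrix.mul_sub, Matrix.sub_mul, Matrix.mul_assoc]

theorem stmt_19 {n q m k : ℕ} (hk : k ≤ q)
    (A : Matrix (Fin n) (Fin n) ℝ) (hA : A.PosDef)
    (V : Matrix (Fin n) (Fin q × Fin m) ℝ)
    (T : Matrix (Fin q × Fin m) (Fin q × Fin m) ℝ)
    (horth : Vᵀ * V = 1)
    (hlanczos : A * V = V * T)
    (hT : T = Vᵀ * A * V)
    (hTk : IsUnit (leadingBlockSub k hk T))
    (Φ0 : Matrix (Fin m) (Fin m) ℝ)
    (X0 X Xk : Matrix (Fin n) (Fin m) ℝ)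
    (hX : X = X0 + V * T⁻¹ * (firstBlockCol : Matrix (Fin q × Fin m) (Fin m) ℝ) * Φ0)
    (hXk : Xk = X0 + leadingBlockCols k hk V * (leadingBlockSub k hk T)⁻¹ * (firstBlockCol : Matrix (Fin k × Fin m) (Fin m) ℝ) * Φ0) :
    (X - Xk)ᵀ * A * (X - Xk) =
      Φ0ᵀ * ((firstBlockCol : Matrix (Fin q × Fin m) (Fin m) ℝ)ᵀ * T⁻¹ * firstBlockCol -
        (firstBlockCol : Matrix (Fin k × Fin m) (Fin m) ℝ)ᵀ * (leadingBlockSub k hk T)⁻¹ * firstBlockCol) * Φ0 :=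
  stmt_19_general hk A hA V T horth hT hTk Φ0 X0 X Xk hX hXk
end
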